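/- The Φ-trigonometric functions satisfy the supersymmetric Pythagorean identity C(x₀,x)·C̃(x₀,x) + S(x₀,x)·S̃(x₀,x) = 1 for all x₀, x ∈ [a,b]. -/

import Mathlib

noncomputable def genX (Φ : ℝ → ℂ) : ℕ → ℝ → ℝ → ℂ
  | 0 => fun _ _ => 1
  | n + 1 => fun x₀ x =>
      (n + 1 : ℕ) * ∫ ξ in x₀..x, genX Φ n x₀ ξ * Φ ξ ^ ((-1 : ℤ) ^ (n + 1))

noncomputable def genXt (Φ : ℝ → ℂ) : ℕ → ℝ → ℝ → ℂ
  | 0 => fun _ _ => 1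
  | n + 1 => fun x₀ x =>
      (n + 1 : ℕ) * ∫ ξ in x₀..x, genXt Φ n x₀ ξ * Φ ξ ^ (-((-1 : ℤ) ^ (n + 1)))

noncomputable def genC (Φ : ℝ → ℂ) (x₀ x : ℝ) : ℂ :=
  ∑' j : ℕ, (-1 : ℂ) ^ j * genX Φ (2 * j) x₀ x / ((2 * j).factorial : ℂ)

noncomputable def genCt (Φ : ℝ → ℂ) (x₀ x : ℝ) : ℂ :=
  ∑' k : ℕ, (-1 : ℂ) ^ k * genXt Φ (2 * k) x₀ x / ((2 * k).factorial : ℂ)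

noncomputable def genS (Φ : ℝ → ℂ) (x₀ x : ℝ) : ℂ :=
  ∑' j : ℕ, (-1 : ℂ) ^ j * genX Φ (2 * j + 1) x₀ x / ((2 * j + 1).factorial : ℂ)

noncomputable def genSt (Φ : ℝ → ℂ) (x₀ x : ℝ) : ℂ :=
  ∑' k : ℕ, (-1 : ℂ) ^ k * genXt Φ (2 * k + 1) x₀ x / ((2 * k + 1).factorial : ℂ)

/-!
Termwise differentiation, justified by `‖X⁽ⁿ⁾(x₀, x)‖ ≤ (M |x - x₀|)ⁿ` where `M` bounds both `Φ`
and `1/Φ`, gives `C' = -Φ S` and `S' = C / Φ`. Since `X̃⁽ⁿ⁾` is `X⁽ⁿ⁾` built from `1/Φ`, also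
`C̃' = -S̃ / Φ` and `S̃' = Φ C̃`, so `C C̃ + S S̃` has zero derivative; at `x = x₀` it equals `1`.
To differentiate on all of `ℝ`, `Φ` is first replaced by `Φ ∘ projIcc a b`, which changes none of
these functions on `[a, b]`.
-/

open Set MeasureTheory

lemma genXt_eq_genX_inv (Φ : ℝ → ℂ) : genXt Φ = genX Φ⁻¹ := by
  funext n
  induction n with
  | zero => rfl
  | succ n ih =>
    funext x₀ x
    simp only [genXt, genX, ih, Pi.inv_apply, inv_zpow']

lemma genCt_eq_genC_inv (Φ : ℝ → ℂ) : genCt Φ = genC Φ⁻¹ := by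
  unfold genCt genC; rw [genXt_eq_genX_inv]

lemma genSt_eq_genS_inv (Φ : ℝ → ℂ) : genSt Φ = genS Φ⁻¹ := by
  unfold genSt genS; rw [genXt_eq_genX_inv]

section Congr

variable {Φ Ψ : ℝ → ℂ} {s : Set ℝ} {x₀ : ℝ}

lemma genX_congr (hs : s.OrdConnected) (h : EqOn Φ Ψ s) (hx₀ : x₀ ∈ s) (n : ℕ) :
    EqOn (genX Φ n x₀) (genX Ψ n x₀) s := by
  induction n with
  | zero => exact fun _ _ ↦ rfl
  | succ n ih =>
    intro x hx
    simp only [genX]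
    congr 1
    refine intervalIntegral.integral_congr fun ξ hξ ↦ ?_
    have hξs : ξ ∈ s := hs.uIcc_subset hx₀ hx hξ
    simp only [ih hξs, h hξs]

lemma genC_congr (hs : s.OrdConnected) (h : EqOn Φ Ψ s) (hx₀ : x₀ ∈ s) {x : ℝ} (hx : x ∈ s) :
    genC Φ x₀ x = genC Ψ x₀ x :=
  tsum_congr fun j ↦ by rw [genX_congr hs h hx₀ _ hx]

lemma genS_congr (hs : s.OrdConnected) (h : EqOn Φ Ψ s) (hx₀ : x₀ ∈ s) {x : ℝ} (hx : x ∈ s) :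
    genS Φ x₀ x = genS Ψ x₀ x :=
  tsum_congr fun j ↦ by rw [genX_congr hs h hx₀ _ hx]

end Congr

section GenX

variable {Ψ : ℝ → ℂ} {M : ℝ}

lemma genX_succ_self (n : ℕ) (x₀ : ℝ) : genX Ψ (n + 1) x₀ x₀ = 0 := by
  simp [genX]

lemma continuous_zpow_of_ne_zero (hc : Continuous Ψ) (h0 : ∀ t, Ψ t ≠ 0) (k : ℤ) :
    Continuous fun t ↦ Ψ t ^ k :=
  hc.zpow₀ k fun t ↦ Or.inl (h0 t)

lemma continuous_genX (hc : Continuous Ψ) (h0 : ∀ t, Ψ t ≠ 0) (x₀ : ℝ) (n : ℕ) :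
    Continuous (genX Ψ n x₀) := by
  induction n with
  | zero => exact continuous_const
  | succ n ih =>
    have hf := ih.mul (continuous_zpow_of_ne_zero hc h0 ((-1 : ℤ) ^ (n + 1)))
    exact continuous_const.mul
      (intervalIntegral.continuous_primitive (fun _ _ ↦ hf.intervalIntegrable _ _) x₀)

lemma hasDerivAt_genX (hc : Continuous Ψ) (h0 : ∀ t, Ψ t ≠ 0) (x₀ : ℝ) (n : ℕ) (x : ℝ) :
    HasDerivAt (genX Ψ (n + 1) x₀)
      ((n + 1 : ℕ) * (genX Ψ n x₀ x * Ψ x ^ ((-1 : ℤ) ^ (n + 1)))) x :=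
  (((continuous_genX hc h0 x₀ n).mul
    (continuous_zpow_of_ne_zero hc h0 _)).integral_hasStrictDerivAt x₀ x).hasDerivAt.const_mul _

lemma norm_zpow_neg_one_pow_le (hM : ∀ t, ‖Ψ t‖ ≤ M ∧ ‖(Ψ t)⁻¹‖ ≤ M) (n : ℕ) (t : ℝ) :
    ‖Ψ t ^ ((-1 : ℤ) ^ n)‖ ≤ M := by
  rcases neg_one_pow_eq_or ℤ n with h | h
  · rw [h, zpow_one]; exact (hM t).1
  · rw [h, zpow_neg_one]; exact (hM t).2

lemma norm_genX_le (hM : ∀ t, ‖Ψ t‖ ≤ M ∧ ‖(Ψ t)⁻¹‖ ≤ M) (x₀ : ℝ) (n : ℕ) (x : ℝ) :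
    ‖genX Ψ n x₀ x‖ ≤ (M * |x - x₀|) ^ n := by
  induction n generalizing x with
  | zero => simp [genX]
  | succ n ih =>
    have hM0 : 0 ≤ M := (norm_nonneg _).trans (hM 0).1
    have hint : ‖∫ ξ in x₀..x, genX Ψ n x₀ ξ * Ψ ξ ^ ((-1 : ℤ) ^ (n + 1))‖ ≤
        M ^ (n + 1) * (|x - x₀| ^ (n + 1) / (n + 1)) := by
      rw [← integral_pow_abs_sub_uIoc, ← integral_const_mul]
      refine intervalIntegral.norm_integral_le_integral_norm_uIoc.trans
        (integral_mono_of_nonneg ?_ ?_ ?_)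
      · exact .of_forall fun ξ ↦ norm_nonneg _
      · exact (continuous_const.mul
          ((continuous_id.sub continuous_const).abs.pow n)).integrableOn_uIoc
      · refine .of_forall fun ξ ↦ ?_
        calc ‖genX Ψ n x₀ ξ * Ψ ξ ^ ((-1 : ℤ) ^ (n + 1))‖
            ≤ (M * |ξ - x₀|) ^ n * M := by
              rw [norm_mul]
              exact mul_le_mul (ih ξ) (norm_zpow_neg_one_pow_le hM _ ξ) (norm_nonneg _)
                (by positivity)
          _ = M ^ (n + 1) * |ξ - x₀| ^ n := by ring
    rw [genX, norm_mul, Complex.norm_natCast]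
    calc ((n + 1 : ℕ) : ℝ) * ‖∫ ξ in x₀..x, genX Ψ n x₀ ξ * Ψ ξ ^ ((-1 : ℤ) ^ (n + 1))‖
        ≤ (n + 1 : ℕ) * (M ^ (n + 1) * (|x - x₀| ^ (n + 1) / (n + 1))) := by gcongr
      _ = (M * |x - x₀|) ^ (n + 1) := by push_cast; field_simp; ring

end GenX

lemma summable_pow_div_factorial_two_mul_add (r : ℝ) (k : ℕ) :
    Summable fun j : ℕ ↦ r ^ (2 * j + k) / ((2 * j + k).factorial : ℝ) :=
  (Real.summable_pow_div_factorial r).comp_injective (i := fun j : ℕ ↦ 2 * j + k)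
    fun i j h ↦ by simp only at h; omega

section AlternatingSeries

variable {T g : ℕ → ℝ → ℂ} {M x₀ : ℝ}

lemma summable_alternating_of_norm_le
    (hT : ∀ n y, ‖T n y‖ ≤ (M * |y - x₀|) ^ n / n.factorial) (k : ℕ) (y : ℝ) :
    Summable fun j : ℕ ↦ (-1 : ℂ) ^ j * T (2 * j + k) y := by
  refine .of_norm_bounded (summable_pow_div_factorial_two_mul_add (M * |y - x₀|) k) fun j ↦ ?_
  rw [norm_mul, norm_pow, norm_neg, norm_one, one_pow, one_mul]
  exact hT _ y

lemma hasDerivAt_tsum_alternating (hderiv : ∀ n y, HasDerivAt (T (n + 1)) (T n y * g n y) y)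
    (hT : ∀ n y, ‖T n y‖ ≤ (M * |y - x₀|) ^ n / n.factorial) (hg : ∀ n y, ‖g n y‖ ≤ M)
    (k : ℕ) (x : ℝ) :
    HasDerivAt (fun z ↦ ∑' j : ℕ, (-1 : ℂ) ^ j * T (2 * j + k + 1) z)
      (∑' j : ℕ, (-1 : ℂ) ^ j * (T (2 * j + k) x * g (2 * j + k) x)) x := by
  have hM0 : 0 ≤ M := (norm_nonneg _).trans (hg 0 0)
  set R := |x - x₀| + 1
  have hu : Summable fun j : ℕ ↦ M * ((M * R) ^ (2 * j + k) / (2 * j + k).factorial) :=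
    (summable_pow_div_factorial_two_mul_add (M * R) k).mul_left M
  refine hasDerivAt_tsum_of_isPreconnected hu Metric.isOpen_ball (convex_ball x₀ R).isPreconnected
    (fun j y _ ↦ (hderiv _ y).const_mul _) (fun j y hy ↦ ?_) (Metric.mem_ball_self (by positivity))
    (summable_alternating_of_norm_le hT (k + 1) x₀) ?_
  · rw [norm_mul, norm_pow, norm_neg, norm_one, one_pow, one_mul, norm_mul, mul_comm]
    gcongr
    · exact hg _ y
    · refine (hT _ y).trans ?_
      gcongr
      exact (Metric.mem_ball.1 hy).le
  · rw [Metric.mem_ball, Real.dist_eq]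
    linarith

end AlternatingSeries

section Trigonometric

variable {Ψ : ℝ → ℂ} {M : ℝ}

lemma hasDerivAt_genX_div_factorial (hc : Continuous Ψ) (h0 : ∀ t, Ψ t ≠ 0) (x₀ : ℝ) (n : ℕ)
    (x : ℝ) :
    HasDerivAt (fun z ↦ genX Ψ (n + 1) x₀ z / (n + 1).factorial)
      (genX Ψ n x₀ x / n.factorial * Ψ x ^ ((-1 : ℤ) ^ (n + 1))) x := by
  refine ((hasDerivAt_genX hc h0 x₀ n x).div_const ((n + 1).factorial : ℂ)).congr_deriv ?_
  rw [Nat.factorial_succ]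
  push_cast
  field_simp

lemma norm_genX_div_factorial_le (hM : ∀ t, ‖Ψ t‖ ≤ M ∧ ‖(Ψ t)⁻¹‖ ≤ M) (x₀ : ℝ) (n : ℕ)
    (x : ℝ) : ‖genX Ψ n x₀ x / n.factorial‖ ≤ (M * |x - x₀|) ^ n / n.factorial := by
  rw [norm_div, Complex.norm_natCast]
  gcongr
  exact norm_genX_le hM x₀ n x

lemma genC_eq_one_sub (hM : ∀ t, ‖Ψ t‖ ≤ M ∧ ‖(Ψ t)⁻¹‖ ≤ M) (x₀ : ℝ) :
    genC Ψ x₀ = fun z ↦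
      1 - ∑' j : ℕ, (-1 : ℂ) ^ j * (genX Ψ (2 * j + 1 + 1) x₀ z / (2 * j + 1 + 1).factorial) := by
  funext z
  have hs := summable_alternating_of_norm_le (norm_genX_div_factorial_le hM x₀) 0 z
  simp only [add_zero] at hs
  simp only [genC, mul_div_assoc]
  rw [hs.tsum_eq_zero_add, sub_eq_add_neg, ← tsum_neg]
  simp [genX, pow_succ, mul_add]

lemma hasDerivAt_genS (hc : Continuous Ψ) (h0 : ∀ t, Ψ t ≠ 0)
    (hM : ∀ t, ‖Ψ t‖ ≤ M ∧ ‖(Ψ t)⁻¹‖ ≤ M) (x₀ x : ℝ) :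
    HasDerivAt (genS Ψ x₀) (genC Ψ x₀ x * (Ψ x)⁻¹) x := by
  have h := hasDerivAt_tsum_alternating (hasDerivAt_genX_div_factorial hc h0 x₀)
    (norm_genX_div_factorial_le hM x₀) (fun n ↦ norm_zpow_neg_one_pow_le hM (n + 1)) 0 x
  have hodd (j : ℕ) : Ψ x ^ ((-1 : ℤ) ^ (2 * j + 1)) = (Ψ x)⁻¹ := by
    rw [(odd_two_mul_add_one j).neg_one_pow, zpow_neg_one]
  simp only [add_zero, hodd, ← mul_assoc] at h
  rw [tsum_mul_right] at h
  unfold genS genC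
  simpa only [mul_div_assoc] using h

lemma hasDerivAt_genC (hc : Continuous Ψ) (h0 : ∀ t, Ψ t ≠ 0)
    (hM : ∀ t, ‖Ψ t‖ ≤ M ∧ ‖(Ψ t)⁻¹‖ ≤ M) (x₀ x : ℝ) :
    HasDerivAt (genC Ψ x₀) (-(genS Ψ x₀ x * Ψ x)) x := by
  have h := hasDerivAt_tsum_alternating (hasDerivAt_genX_div_factorial hc h0 x₀)
    (norm_genX_div_factorial_le hM x₀) (fun n ↦ norm_zpow_neg_one_pow_le hM (n + 1)) 1 x
  rw [genC_eq_one_sub hM x₀]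
  have heven (j : ℕ) : Ψ x ^ ((-1 : ℤ) ^ (2 * j + 1 + 1)) = Ψ x := by
    rw [(odd_two_mul_add_one j).add_one.neg_one_pow, zpow_one]
  simp only [heven, ← mul_assoc] at h
  rw [tsum_mul_right] at h
  unfold genS
  simpa only [mul_div_assoc] using h.const_sub 1

lemma genC_self (hM : ∀ t, ‖Ψ t‖ ≤ M ∧ ‖(Ψ t)⁻¹‖ ≤ M) (x₀ : ℝ) : genC Ψ x₀ x₀ = 1 := by
  simp [genC_eq_one_sub hM, genX_succ_self]

lemma genS_self (x₀ : ℝ) : genS Ψ x₀ x₀ = 0 := by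
  simp [genS, genX_succ_self]

theorem genC_mul_genC_inv_add_genS_mul_genS_inv (hc : Continuous Ψ) (h0 : ∀ t, Ψ t ≠ 0)
    (hM : ∀ t, ‖Ψ t‖ ≤ M ∧ ‖(Ψ t)⁻¹‖ ≤ M) (x₀ x : ℝ) :
    genC Ψ x₀ x * genC Ψ⁻¹ x₀ x + genS Ψ x₀ x * genS Ψ⁻¹ x₀ x = 1 := by
  have hc' : Continuous Ψ⁻¹ := hc.inv₀ h0
  have h0' (t : ℝ) : Ψ⁻¹ t ≠ 0 := inv_ne_zero (h0 t)
  have hM' (t : ℝ) : ‖Ψ⁻¹ t‖ ≤ M ∧ ‖(Ψ⁻¹ t)⁻¹‖ ≤ M := by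
    simpa only [Pi.inv_apply, inv_inv] using (hM t).symm
  have hderiv (y : ℝ) : HasDerivAt
      (fun z ↦ genC Ψ x₀ z * genC Ψ⁻¹ x₀ z + genS Ψ x₀ z * genS Ψ⁻¹ x₀ z) 0 y := by
    refine (((hasDerivAt_genC hc h0 hM x₀ y).mul (hasDerivAt_genC hc' h0' hM' x₀ y)).add
      ((hasDerivAt_genS hc h0 hM x₀ y).mul (hasDerivAt_genS hc' h0' hM' x₀ y))).congr_deriv ?_
    simp only [Pi.inv_apply, inv_inv]
    ring
  rw [is_const_of_deriv_eq_zero (fun y ↦ (hderiv y).differentiableAt) (fun y ↦ (hderiv y).deriv)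
    x x₀, genC_self hM, genC_self hM', genS_self, genS_self]
  ring

end Trigonometric

lemma exists_norm_le_and_norm_inv_le {s : Set ℝ} (hs : IsCompact s) {Φ : ℝ → ℂ}
    (hc : ContinuousOn Φ s) (h0 : ∀ y ∈ s, Φ y ≠ 0) :
    ∃ M, ∀ y ∈ s, ‖Φ y‖ ≤ M ∧ ‖(Φ y)⁻¹‖ ≤ M := by
  obtain ⟨M₁, hM₁⟩ := hs.exists_bound_of_continuousOn hc
  obtain ⟨M₂, hM₂⟩ := hs.exists_bound_of_continuousOn (hc.inv₀ h0)
  exact ⟨max M₁ M₂, fun y hy ↦ ⟨(hM₁ y hy).trans (le_max_left _ _),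
    (hM₂ y hy).trans (le_max_right _ _)⟩⟩

theorem stmt_10 (a b : ℝ) (Φ : ℝ → ℂ) (hΦc : ContinuousOn Φ (Set.Icc a b))
    (hΦ0 : ∀ y ∈ Set.Icc a b, Φ y ≠ 0) (x₀ x : ℝ)
    (hx₀ : x₀ ∈ Set.Icc a b) (hx : x ∈ Set.Icc a b) :
    genC Φ x₀ x * genCt Φ x₀ x + genS Φ x₀ x * genSt Φ x₀ x = 1 := by
  have hab : a ≤ b := hx₀.1.trans hx₀.2
  set Ψ : ℝ → ℂ := fun t ↦ Φ (projIcc a b hab t)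
  have hΦΨ : EqOn Φ Ψ (Icc a b) := fun y hy ↦ by simp only [Ψ, projIcc_of_mem hab hy]
  have hΦΨ' : EqOn Φ⁻¹ Ψ⁻¹ (Icc a b) := fun y hy ↦ by simp only [Pi.inv_apply, hΦΨ hy]
  obtain ⟨M, hM⟩ := exists_norm_le_and_norm_inv_le isCompact_Icc hΦc hΦ0
  rw [genCt_eq_genC_inv, genSt_eq_genS_inv, genC_congr ordConnected_Icc hΦΨ hx₀ hx,
    genS_congr ordConnected_Icc hΦΨ hx₀ hx, genC_congr ordConnected_Icc hΦΨ' hx₀ hx,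
    genS_congr ordConnected_Icc hΦΨ' hx₀ hx]
  exact genC_mul_genC_inv_add_genS_mul_genS_inv
    (hΦc.comp_continuous continuous_projIcc.subtype_val fun t ↦ (projIcc a b hab t).2)
    (fun t ↦ hΦ0 _ (projIcc a b hab t).2) (fun t ↦ hM _ (projIcc a b hab t).2) x₀ x
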